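/- arXiv:1801.08449 — 6 statements merged into one kernel-verified Lean document; each statement's English description precedes it below -/
import Mathlib

section
/- Let φ be a flow on a compact metric space (M,d) having no fixed points. Then φ is cw-expansive if and only if there exists c > 0 such that for every continuum of clocks α : A → 𝒞 with diam(Φ_t^α(A)) < c for all t ∈ ℝ, the set A is an orbit segment. -/
open Set Metric Filter

/-- A flow on a topological space: a continuous map `ℝ × M → M` with
`φ 0 x = x` and `φ (s+t) x = φ s (φ t x)`. -/
structure IsFlow {M : Type*} [TopologicalSpace M] (φ : ℝ → M → M) : Prop where
  continuous : Continuous fun p : ℝ × M => φ p.1 p.2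
  map_zero : ∀ x, φ 0 x = x
  map_add : ∀ s t x, φ (s + t) x = φ s (φ t x)

/-- The set of fixed (singular) points of a flow. -/
def fixedPoints {M : Type*} (φ : ℝ → M → M) : Set M := {p | ∀ t, φ t p = p}

/-- A continuum: a nonempty compact connected subset. -/
def IsContinuum {M : Type*} [TopologicalSpace M] (A : Set M) : Prop :=
  IsCompact A ∧ IsConnected A

/-- An orbit segment: the image `φ_I(x)` of an interval `I ⊆ ℝ`. -/
def IsOrbitSegment {M : Type*} (φ : ℝ → M → M) (A : Set M) : Prop :=
  ∃ (x : M) (I : Set ℝ), I.OrdConnected ∧ A = (fun t => φ t x) '' I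

/-- A clock: an increasing homeomorphism `c : ℝ → ℝ` (equivalently, a continuous,
strictly monotone surjection) with `c 0 = 0`. -/
def IsClock (c : C(ℝ, ℝ)) : Prop :=
  StrictMono c ∧ Function.Surjective c ∧ c 0 = 0

/-- The clock space, topologized as a subspace of `C(ℝ, ℝ)` with the
compact-open topology. -/
abbrev Clock : Type := {c : C(ℝ, ℝ) // IsClock c}

/-- `Φ_t^α(A) = {φ(α_x(t), x) : x ∈ A}` for a family of clocks `α` indexed by `A`. -/
def clockImage {M : Type*} (φ : ℝ → M → M) (A : Set M) (α : A → Clock) (t : ℝ) : Set M :=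
  Set.range fun x : A => φ (((α x).1 : C(ℝ, ℝ)) t) (x : M)

/-- Singular cw-expansivity with expansivity constant `c`: every continuum of clocks
`α : A → 𝒞` with `diam (Φ_t^α(A)) < c` for all `t` has `A` an orbit segment. -/
def SingularCwExpansiveWith {M : Type*} [MetricSpace M] (φ : ℝ → M → M) (c : ℝ) : Prop :=
  ∀ (A : Set M) (α : A → Clock), IsContinuum A → Continuous α →
    (∀ t : ℝ, Metric.diam (clockImage φ A α t) < c) → IsOrbitSegment φ A

/-- Singular cw-expansivity: some `c > 0` is an expansivity constant. -/
def SingularCwExpansive {M : Type*} [MetricSpace M] (φ : ℝ → M → M) : Prop :=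
  ∃ c > 0, SingularCwExpansiveWith φ c

/-- Kinematic cw-expansivity with expansivity constant `c`. -/
def KinematicCwExpansiveWith {M : Type*} [MetricSpace M] (φ : ℝ → M → M) (c : ℝ) : Prop :=
  ∀ A : Set M, IsContinuum A → (∀ t : ℝ, Metric.diam ((fun x => φ t x) '' A) < c) →
    IsOrbitSegment φ A

/-- Kinematic cw-expansivity: some `c > 0` is an expansivity constant. -/
def KinematicCwExpansive {M : Type*} [MetricSpace M] (φ : ℝ → M → M) : Prop :=
  ∃ c > 0, KinematicCwExpansiveWith φ c

/-- Cordeiro's cw-expansivity. -/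
def CwExpansive {M : Type*} [MetricSpace M] (φ : ℝ → M → M) : Prop :=
  ∀ ε > (0:ℝ), ∃ δ > (0:ℝ), ∀ (A : Set M) (α : A → Clock), IsContinuum A → Continuous α →
    (∀ t : ℝ, Metric.diam (clockImage φ A α t) < δ) →
    ∃ x ∈ A, A ⊆ (fun t => φ t x) '' Set.Ioo (-ε) ε

/-- A set `Λ` is `φ`-isolated if some open `U ⊇ Λ` contains no full orbit
other than those inside `Λ`. -/
def IsPhiIsolated {M : Type*} [TopologicalSpace M] (φ : ℝ → M → M) (Λ : Set M) : Prop :=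
  ∃ U : Set M, IsOpen U ∧ Λ ⊆ U ∧
    ∀ x : M, (Set.range fun t => φ t x) ⊆ U → (Set.range fun t => φ t x) ⊆ Λ

section Aux

variable {M : Type*} [MetricSpace M] {φ : ℝ → M → M}

private lemma aux_cont_t (hφ : IsFlow φ) (t : ℝ) : Continuous fun x : M => φ t x :=
  hφ.continuous.comp (continuous_const.prodMk continuous_id)

private lemma aux_flat_fixed (hφ : IsFlow φ) {y : M} {ε : ℝ} (hε : 0 < ε)
    (h : ∀ t ∈ Icc (0:ℝ) ε, φ t y = y) : ∀ t, φ t y = y := by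
  have hnn : ∀ t ≥ (0:ℝ), φ t y = y := by
    have key : ∀ n : ℕ, ∀ t ∈ Icc (0:ℝ) (n * ε), φ t y = y := by
      intro n
      induction n with
      | zero => intro t ht; simp at ht; rw [ht, hφ.map_zero]
      | succ n ih =>
        intro t ht
        rcases le_or_gt t ε with h1 | h1
        · exact h t ⟨ht.1, h1⟩
        · have h0 : (0:ℝ) ≤ t - ε := by linarith
          have h2 : t - ε ≤ n * ε := by have := ht.2; push_cast at this; nlinarith
          have : φ t y = φ ε (φ (t - ε) y) := by
            rw [← hφ.map_add]; ring_nf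
          rw [this, ih _ ⟨h0, h2⟩, h ε ⟨hε.le, le_rfl⟩]
    intro t ht
    obtain ⟨n, hn⟩ := exists_nat_ge (t / ε)
    have : t ≤ n * ε := by rw [div_le_iff₀ hε] at hn; linarith
    exact key n t ⟨ht, this⟩
  intro t
  rcases le_or_gt 0 t with h1 | h1
  · exact hnn t h1
  · have := hnn (-t) (by linarith)
    calc φ t y = φ t (φ (-t) y) := by rw [this]
    _ = φ (t + -t) y := (hφ.map_add _ _ _).symm
    _ = y := by rw [add_neg_cancel, hφ.map_zero]

private lemma aux_nat_period (hφ : IsFlow φ) {y : M} {s : ℝ} (h : φ s y = y) :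
    ∀ k : ℕ, φ (k * s) y = y := by
  intro k
  induction k with
  | zero => simpa using hφ.map_zero y
  | succ k ih =>
    have : ((k:ℝ)+1) * s = (k:ℝ)*s + s := by ring
    push_cast
    rw [this, hφ.map_add, h, ih]

private lemma aux_diam_growth [CompactSpace M] (hφ : IsFlow φ)
    (hfix : fixedPoints φ = ∅) {ε : ℝ} (hε : 0 < ε) :
    ∃ δ > (0:ℝ), ∀ y : M, ∃ t ∈ Icc (0:ℝ) ε, δ ≤ dist (φ t y) y := by
  by_contra hc
  push_neg at hc
  have H : ∀ n : ℕ, ∃ y : M, ∀ t ∈ Icc (0:ℝ) ε, dist (φ t y) y < 1/(n+1) := by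
    intro n
    have h1 : (0:ℝ) < 1/(n+1) := by positivity
    obtain ⟨y, hy⟩ := hc (1/(n+1)) h1
    exact ⟨y, hy⟩
  choose y hy using H
  obtain ⟨a, -, σ, hσ, hconv⟩ := isCompact_univ.tendsto_subseq (x := y) (fun n => mem_univ _)
  have hafix : ∀ t, φ t a = a := by
    apply aux_flat_fixed hφ hε
    intro t ht
    have l1 : Tendsto (fun n => dist (φ t (y (σ n))) (y (σ n))) atTop (nhds (dist (φ t a) a)) := by
      have := ((aux_cont_t hφ t).tendsto a).comp hconv
      exact (this.dist hconv)
    have l2 : Tendsto (fun n => dist (φ t (y (σ n))) (y (σ n))) atTop (nhds 0) := by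
      apply squeeze_zero (fun n => dist_nonneg)
        (fun n => (hy (σ n) t ht).le.trans ?_) tendsto_one_div_add_atTop_nhds_zero_nat
      have h9 : (n:ℝ) ≤ (σ n : ℝ) := by exact_mod_cast hσ.le_apply (x := n)
      exact one_div_le_one_div_of_le (by positivity) (by linarith)
    exact dist_eq_zero.mp (tendsto_nhds_unique l1 l2)
  have : a ∈ fixedPoints φ := hafix
  rw [hfix] at this
  exact this

private lemma aux_min_period [CompactSpace M] (hφ : IsFlow φ)
    (hfix : fixedPoints φ = ∅) :
    ∃ T > (0:ℝ), ∀ (y : M) (t : ℝ), φ t y = y → t = 0 ∨ T ≤ |t| := by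
  by_contra hc
  push_neg at hc
  have H : ∀ n : ℕ, ∃ (y : M) (s : ℝ), 0 < s ∧ s < 1/(n+1) ∧ φ s y = y := by
    intro n
    have h1 : (0:ℝ) < 1/(n+1) := by positivity
    obtain ⟨y, t, hty, ht0, htl⟩ := hc (1/(n+1)) h1
    rcases lt_trichotomy t 0 with h | h | h
    · refine ⟨y, -t, by linarith, by rw [abs_of_neg h] at htl; linarith, ?_⟩
      calc φ (-t) y = φ (-t) (φ t y) := by rw [hty]
      _ = φ (-t + t) y := (hφ.map_add _ _ _).symm
      _ = y := by rw [neg_add_cancel, hφ.map_zero]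
    · exact absurd h ht0
    · exact ⟨y, t, h, by rwa [abs_of_pos h] at htl, hty⟩
  choose y s hs0 hs1 hsp using H
  obtain ⟨a, -, σ, hσ, hconv⟩ := isCompact_univ.tendsto_subseq (x := y) (fun n => mem_univ _)
  have hafix : ∀ t, φ t a = a := by
    have key : ∀ t ≥ (0:ℝ), φ t a = a := by
      intro t ht
      set r : ℕ → ℝ := fun n => t - ⌊t / s n⌋ * s n with hr
      have hr0 : ∀ n, 0 ≤ r n := by
        intro n
        have := Int.floor_le (t / s n)
        have h2 : (⌊t / s n⌋ : ℝ) * s n ≤ t := by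
          rw [← le_div_iff₀ (hs0 n)] at *; linarith
        simp [hr]; linarith
      have hr1 : ∀ n, r n < s n := by
        intro n
        have := Int.lt_floor_add_one (t / s n)
        have h2 : t < (⌊t / s n⌋ + 1) * s n := by
          rw [← div_lt_iff₀ (hs0 n)]; linarith
        simp [hr]; nlinarith
      have hphin : ∀ n, φ t (y n) = φ (r n) (y n) := by
        intro n
        have hfl : (0:ℤ) ≤ ⌊t / s n⌋ := Int.floor_nonneg.mpr (div_nonneg ht (hs0 n).le)
        have hper : φ ((⌊t / s n⌋ : ℝ) * s n) (y n) = y n := by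
          have := aux_nat_period hφ (hsp n) ⌊t / s n⌋.toNat
          rw [show ((⌊t / s n⌋.toNat : ℕ) : ℝ) = (⌊t / s n⌋ : ℝ) by
            rw [← Int.cast_natCast, Int.toNat_of_nonneg hfl]] at this
          exact this
        calc φ t (y n) = φ (r n + (⌊t / s n⌋ : ℝ) * s n) (y n) := by rw [hr]; ring_nf
        _ = φ (r n) (φ ((⌊t / s n⌋ : ℝ) * s n) (y n)) := hφ.map_add _ _ _
        _ = φ (r n) (y n) := by rw [hper]
      have l1 : Tendsto (fun n => φ t (y (σ n))) atTop (nhds (φ t a)) :=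
        ((aux_cont_t hφ t).tendsto a).comp hconv
      have l2 : Tendsto (fun n => φ t (y (σ n))) atTop (nhds a) := by
        have hrc : Tendsto (fun n => r (σ n)) atTop (nhds 0) := by
          apply squeeze_zero (fun n => hr0 _)
            (fun n => (hr1 (σ n)).le.trans ((hs1 (σ n)).le.trans ?_))
            tendsto_one_div_add_atTop_nhds_zero_nat
          have h9 : (n:ℝ) ≤ (σ n : ℝ) := by exact_mod_cast hσ.le_apply (x := n)
          exact one_div_le_one_div_of_le (by positivity) (by linarith)
        have : Tendsto (fun n => ((r (σ n), y (σ n)) : ℝ × M)) atTop (nhds (0, a)) :=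
          hrc.prodMk_nhds hconv
        have := (hφ.continuous.tendsto (0, a)).comp this
        simp only [hφ.map_zero] at this
        simpa only [hphin, Function.comp_def] using this
      exact tendsto_nhds_unique l1 l2
    intro t
    rcases le_or_gt 0 t with h1 | h1
    · exact key t h1
    · have := key (-t) (by linarith)
      calc φ t a = φ t (φ (-t) a) := by rw [this]
      _ = φ (t + -t) a := (hφ.map_add _ _ _).symm
      _ = a := by rw [add_neg_cancel, hφ.map_zero]
  have : a ∈ fixedPoints φ := hafix
  rw [hfix] at this
  exact this

private lemma aux_clockImage_zero (hφ : IsFlow φ) (A : Set M) (α : A → Clock) :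
    clockImage φ A α 0 = A := by
  have : ∀ x : A, φ (((α x).1 : C(ℝ,ℝ)) 0) (x : M) = x := fun x => by
    rw [(α x).2.2.2, hφ.map_zero]
  unfold clockImage
  simp only [this]
  exact Subtype.range_coe

end Aux

theorem stmt_0 {M : Type*} [MetricSpace M] [CompactSpace M]
    (φ : ℝ → M → M) (hφ : IsFlow φ) (hfix : fixedPoints φ = ∅) :
    CwExpansive φ ↔ ∃ c > (0:ℝ), SingularCwExpansiveWith φ c := by
  constructor
  · -- forward
    intro hcw
    obtain ⟨T, hT, hTm⟩ := aux_min_period hφ hfix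
    set ε := T / 3 with hεdef
    have hε : 0 < ε := by positivity
    obtain ⟨δ, hδ, hδ'⟩ := hcw ε hε
    refine ⟨δ, hδ, ?_⟩
    intro A α hA hα hd
    obtain ⟨x, hxA, hsub⟩ := hδ' A α hA hα hd
    set j : ℝ → M := fun t => φ t x with hj
    have hinj : Set.InjOn j (Icc (-ε) ε) := by
      intro a ha b hb hab
      have hper : φ (a - b) (φ b x) = φ b x := by
        rw [← hφ.map_add, show a - b + b = a by ring]; exact hab
      rcases hTm _ _ hper with h | h
      · linarith [sub_eq_zero.mp h]
      · have : |a - b| ≤ 2 * ε := by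
          rw [abs_le]; constructor <;> [linarith [ha.1, hb.2]; linarith [ha.2, hb.1]]
        linarith [hεdef ▸ this]
    have hcK : CompactSpace (Icc (-ε) ε) := isCompact_iff_compactSpace.mp isCompact_Icc
    set e : Icc (-ε) ε → M := (Icc (-ε) ε).restrict j with he
    have hce : Continuous e := by
      have : e = (fun p : ℝ × M => φ p.1 p.2) ∘ (fun t : Icc (-ε) ε => ((t : ℝ), x)) := rfl
      rw [this]
      exact hφ.continuous.comp (continuous_subtype_val.prodMk continuous_const)
    have hie : Function.Injective e := fun a b h => Subtype.ext (hinj a.2 b.2 h)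
    have hemb := hce.isClosedEmbedding hie
    have hAr : A ⊆ Set.range e := by
      rw [he, show Set.range ((Icc (-ε) ε).restrict j) = j '' Icc (-ε) ε by exact Set.range_restrict _ _]
      exact hsub.trans (Set.image_mono Set.Ioo_subset_Icc_self)
    have hI0 : IsPreconnected (e ⁻¹' A) :=
      hA.2.2.preimage_of_isClosedMap hie hemb.isClosedMap hAr
    set I : Set ℝ := Subtype.val '' (e ⁻¹' A) with hIdef
    have hIpc : IsPreconnected I := hI0.image _ continuous_subtype_val.continuousOn
    refine ⟨x, I, hIpc.ordConnected, ?_⟩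
    ext a
    constructor
    · intro haA
      obtain ⟨t, htI, hte⟩ := hsub haA
      have htK : t ∈ Icc (-ε) ε := Set.Ioo_subset_Icc_self htI
      refine ⟨t, ⟨⟨t, htK⟩, ?_, rfl⟩, hte⟩
      show e ⟨t, htK⟩ ∈ A
      show j t ∈ A; rw [hte]; exact haA
    · rintro ⟨t, ⟨u, huA, rfl⟩, rfl⟩
      exact huA
  · -- reverse
    rintro ⟨c, hc, hs⟩
    intro ε hε
    obtain ⟨δ₁, hδ₁, hgrow⟩ := aux_diam_growth hφ hfix hε
    refine ⟨min c δ₁, lt_min hc hδ₁, ?_⟩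
    intro A α hA hα hd
    have hdc : ∀ t, Metric.diam (clockImage φ A α t) < c :=
      fun t => (hd t).trans_le (min_le_left _ _)
    obtain ⟨x₀, I, hIoc, hAI⟩ := hs A α hA hα hdc
    have hdA : Metric.diam A < δ₁ := by
      have := hd 0
      rw [aux_clockImage_zero hφ A α] at this
      exact this.trans_le (min_le_right _ _)
    have hbound : ∀ a ∈ I, ∀ b ∈ I, b - a < ε := by
      intro a ha b hb
      by_contra hcon
      push_neg at hcon
      obtain ⟨t, ht, hdist⟩ := hgrow (φ a x₀)
      have hatI : a + t ∈ I := hIoc.out ha hb ⟨by linarith [ht.1], by linarith [ht.2]⟩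
      have p1 : φ (a + t) x₀ ∈ A := hAI ▸ ⟨a + t, hatI, rfl⟩
      have p2 : φ a x₀ ∈ A := hAI ▸ ⟨a, ha, rfl⟩
      have heq : φ t (φ a x₀) = φ (a + t) x₀ := by
        rw [← hφ.map_add, add_comm]
      rw [heq] at hdist
      have := dist_le_diam_of_mem hA.1.isBounded p1 p2
      linarith
    have hIne : I.Nonempty := by
      obtain ⟨a0, ha0⟩ := hA.2.1
      rw [hAI] at ha0
      obtain ⟨s, hsI, -⟩ := ha0
      exact ⟨s, hsI⟩
    obtain ⟨s₀, hs₀⟩ := hIne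
    refine ⟨φ s₀ x₀, hAI ▸ ⟨s₀, hs₀, rfl⟩, ?_⟩
    intro a haA
    rw [hAI] at haA
    obtain ⟨sa, hsaI, rfl⟩ := haA
    refine ⟨sa - s₀, ⟨by linarith [hbound sa hsaI s₀ hs₀], by linarith [hbound s₀ hs₀ sa hsaI]⟩, ?_⟩
    show φ (sa - s₀) (φ s₀ x₀) = φ sa x₀
    rw [← hφ.map_add, show sa - s₀ + s₀ = sa by ring]
end

section
/- Let φ be a flow on a compact metric space (M,d) and let γ > 0 and ε > 0. Then there exists β > 0 such that for every x ∈ M with d(x, p) ≥ γ for all p ∈ fix(φ), and every s ∈ ℝ such that diam(φ_{[0,s]}(x)) < β (where [0,s] denotes the closed interval with endpoints 0 and s), one has |s| < ε. -/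
open Set Metric Filter

open Topology in
lemma aux_fixed {M : Type*} [TopologicalSpace M] (φ : ℝ → M → M) (hφ : IsFlow φ)
    {x : M} {ε : ℝ} (hε : 0 < ε) (h : ∀ t ∈ Set.Icc 0 ε, φ t x = x) :
    x ∈ fixedPoints φ := by
  have hmul : ∀ (n : ℕ) (s : ℝ), φ s x = x → φ (n * s) x = x := by
    intro n
    induction n with
    | zero => intro s _; simpa using hφ.map_zero x
    | succ n ih =>
      intro s hs
      have h1 : ((n + 1 : ℕ) : ℝ) * s = s + n * s := by push_cast; ring
      rw [h1, hφ.map_add, ih s hs, hs]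
  have hneg : ∀ s : ℝ, φ s x = x → φ (-s) x = x := by
    intro s hs
    have h2 := hφ.map_add (-s) s x
    rw [hs, neg_add_cancel, hφ.map_zero] at h2
    exact h2.symm
  intro t
  obtain ⟨n, hn⟩ := exists_nat_ge (|t| / ε)
  set m : ℕ := n + 1 with hm
  have hmpos : (0 : ℝ) < m := by positivity
  have hts : |t / m| ≤ ε := by
    rw [abs_div, abs_of_pos hmpos, div_le_iff₀ hmpos]
    have : |t| ≤ ε * n := by
      rw [div_le_iff₀ hε] at hn
      linarith [hn]
    have hεn : ε * (n : ℝ) ≤ ε * m := by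
      have : (n : ℝ) ≤ m := by exact_mod_cast Nat.le_succ n
      nlinarith
    linarith
  have h1 : φ (t / m) x = x := by
    rcases le_or_gt 0 (t / m) with h0 | h0
    · exact h _ ⟨h0, by rwa [abs_of_nonneg h0] at hts⟩
    · have h3 : φ (-(t / m)) x = x :=
        h _ ⟨by linarith, by rwa [abs_of_neg h0] at hts⟩
      have := hneg _ h3
      simpa using this
  have h4 := hmul m (t / m) h1
  rwa [mul_div_cancel₀ _ (ne_of_gt hmpos)] at h4

open Topology in
lemma aux_limit {M : Type*} [MetricSpace M] [CompactSpace M]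
    (φ : ℝ → M → M) (hφ : IsFlow φ) {γ ε : ℝ} (hγ : 0 < γ) (hε : 0 < ε)
    (y : ℕ → M) (hfar : ∀ n, ∀ p ∈ fixedPoints φ, γ ≤ dist (y n) p)
    (hsmall : ∀ n, ∀ t ∈ Set.Icc 0 ε, dist (φ t (y n)) (y n) ≤ 1 / (n + 1)) :
    False := by
  obtain ⟨z, -, k, hk, hz⟩ := isCompact_univ.tendsto_subseq (fun n => Set.mem_univ (y n))
  have hzfix : z ∈ fixedPoints φ := by
    apply aux_fixed φ hφ hε
    intro t ht
    have hc : Continuous fun a : M => dist (φ t a) a :=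
      (hφ.continuous.comp (continuous_const.prodMk continuous_id)).dist continuous_id
    have h1 : Tendsto (fun n => dist (φ t (y (k n))) (y (k n))) atTop (𝓝 (dist (φ t z) z)) :=
      (hc.tendsto z).comp hz
    have h2 : Tendsto (fun n => dist (φ t (y (k n))) (y (k n))) atTop (𝓝 0) := by
      apply squeeze_zero (fun n => dist_nonneg) (fun n => ?_)
        tendsto_one_div_add_atTop_nhds_zero_nat
      calc dist (φ t (y (k n))) (y (k n)) ≤ 1 / (k n + 1) := hsmall (k n) t ht
        _ ≤ 1 / (n + 1) := by
            apply one_div_le_one_div_of_le (by positivity)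
            have : (n : ℝ) ≤ k n := by exact_mod_cast hk.le_apply
            linarith
    have := tendsto_nhds_unique h1 h2
    exact dist_eq_zero.mp this
  have h3 : Tendsto (fun n => dist (y (k n)) z) atTop (𝓝 0) :=
    (tendsto_iff_dist_tendsto_zero.mp hz)
  have h4 : γ ≤ (0 : ℝ) :=
    le_of_tendsto_of_tendsto tendsto_const_nhds h3
      (Filter.Eventually.of_forall fun n => hfar (k n) z hzfix)
  linarith

lemma aux_reverse {M : Type*} [TopologicalSpace M] (φ : ℝ → M → M) (hφ : IsFlow φ) :
    IsFlow (fun t x => φ (-t) x) := by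
  refine ⟨?_, ?_, ?_⟩
  · exact hφ.continuous.comp ((continuous_neg.comp continuous_fst).prodMk continuous_snd)
  · intro x; simpa using hφ.map_zero x
  · intro s t x
    have : -(s + t) = -s + -t := by ring
    rw [this, hφ.map_add]

lemma aux_reverse_fixed {M : Type*} (φ : ℝ → M → M) :
    fixedPoints (fun t x => φ (-t) x) = fixedPoints φ := by
  ext p
  constructor
  · intro hp t
    have := hp (-t)
    simpa using this
  · intro hp t
    exact hp (-t)

theorem stmt_3 {M : Type*} [MetricSpace M] [CompactSpace M]
    (φ : ℝ → M → M) (hφ : IsFlow φ) (γ ε : ℝ) (hγ : 0 < γ) (hε : 0 < ε) :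
    ∃ β > (0:ℝ), ∀ x : M, (∀ p ∈ fixedPoints φ, γ ≤ dist x p) →
      ∀ s : ℝ, Metric.diam ((fun t => φ t x) '' Set.uIcc 0 s) < β → |s| < ε := by
  by_contra hcon
  push_neg at hcon
  choose x hxfar s hsdiam hsbig using fun n : ℕ =>
    hcon (1 / (n + 1)) (by positivity)
  have hPQ : ∀ n : ℕ, (∀ t ∈ Set.Icc 0 ε, dist (φ t (x n)) (x n) ≤ 1 / (n + 1))
      ∨ (∀ t ∈ Set.Icc (-ε) 0, dist (φ t (x n)) (x n) ≤ 1 / (n + 1)) := by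
    intro n
    have hb : Bornology.IsBounded ((fun t => φ t (x n)) '' Set.uIcc 0 (s n)) := by
      apply (isCompact_uIcc.image ?_).isBounded
      exact hφ.continuous.comp (continuous_id.prodMk continuous_const)
    have hdist : ∀ t ∈ Set.uIcc 0 (s n), dist (φ t (x n)) (x n) ≤ 1 / (n + 1) := by
      intro t ht
      calc dist (φ t (x n)) (x n)
          = dist (φ t (x n)) (φ 0 (x n)) := by rw [hφ.map_zero]
        _ ≤ Metric.diam ((fun u => φ u (x n)) '' Set.uIcc 0 (s n)) :=
            Metric.dist_le_diam_of_mem hb ⟨t, ht, rfl⟩ ⟨0, Set.left_mem_uIcc, rfl⟩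
        _ ≤ 1 / (n + 1) := (hsdiam n).le
    rcases le_abs.mp (hsbig n) with h1 | h1
    · left
      intro t ht
      exact hdist t (Set.mem_uIcc.mpr (Or.inl ⟨ht.1, le_trans ht.2 h1⟩))
    · right
      intro t ht
      exact hdist t (Set.mem_uIcc.mpr (Or.inr ⟨by linarith [ht.1], ht.2⟩))
  have hfreq : (∃ᶠ n in atTop, ∀ t ∈ Set.Icc 0 ε, dist (φ t (x n)) (x n) ≤ 1 / (n + 1))
      ∨ (∃ᶠ n in atTop, ∀ t ∈ Set.Icc (-ε) 0, dist (φ t (x n)) (x n) ≤ 1 / (n + 1)) := by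
    rw [← Filter.frequently_or_distrib]
    exact (Filter.Eventually.of_forall hPQ).frequently
  rcases hfreq with hfr | hfr
  · obtain ⟨j, hjmono, hj⟩ := Filter.extraction_of_frequently_atTop hfr
    apply aux_limit φ hφ hγ hε (fun n => x (j n)) (fun n => hxfar (j n))
    intro n t ht
    calc dist (φ t (x (j n))) (x (j n)) ≤ 1 / (j n + 1) := hj n t ht
      _ ≤ 1 / (n + 1) := by
          apply one_div_le_one_div_of_le (by positivity)
          have : (n : ℝ) ≤ j n := by exact_mod_cast hjmono.le_apply
          linarith
  · obtain ⟨j, hjmono, hj⟩ := Filter.extraction_of_frequently_atTop hfr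
    apply aux_limit (fun t x => φ (-t) x) (aux_reverse φ hφ) hγ hε
      (fun n => x (j n))
    · intro n p hp
      exact hxfar (j n) p (by rwa [aux_reverse_fixed] at hp)
    · intro n t ht
      calc dist (φ (-t) (x (j n))) (x (j n)) ≤ 1 / (j n + 1) :=
            hj n (-t) ⟨by linarith [ht.2], by linarith [ht.1]⟩
        _ ≤ 1 / (n + 1) := by
            apply one_div_le_one_div_of_le (by positivity)
            have : (n : ℝ) ≤ j n := by exact_mod_cast hjmono.le_apply
            linarith
end

section
/- Let φ be a flow on a compact metric space (M,d). If φ is kinematic cw-expansive, then the set fix(φ) of fixed points of φ is totally disconnected. -/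
open Set Metric Filter

/-- Boundary bumping: in a compact preconnected set `T` containing `x` and a point `y`
farther than `r` from `x`, there is a continuum in `T ∩ closedBall x r` containing `x`
and reaching the sphere of radius `r`. -/
lemma bump_aux {M : Type*} [MetricSpace M] {T : Set M} (hTc : IsCompact T)
    (hTp : IsPreconnected T) {x y : M} (hx : x ∈ T) (hy : y ∈ T) {r : ℝ}
    (hr : 0 < r) (hry : r < dist x y) :
    ∃ A : Set M, IsCompact A ∧ IsConnected A ∧ A ⊆ T ∧ A ⊆ closedBall x r ∧
      x ∈ A ∧ ∃ z ∈ A, dist x z = r := by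
  set K : Set M := T ∩ closedBall x r with hKdef
  have hK : IsCompact K := hTc.inter_right Metric.isClosed_closedBall
  haveI : CompactSpace ↥K := isCompact_iff_compactSpace.mp hK
  have hxK : x ∈ K := ⟨hx, mem_closedBall_self hr.le⟩
  set xK : ↥K := ⟨x, hxK⟩ with hxKdef
  set C : Set ↥K := connectedComponent xK with hCdef
  set A : Set M := Subtype.val '' C with hAdef
  have hACc : IsCompact A :=
    (isClosed_connectedComponent.isCompact).image continuous_subtype_val
  have hAconn : IsConnected A :=
    isConnected_connectedComponent.image _ continuous_subtype_val.continuousOn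
  have hAK : A ⊆ K := by rintro a ⟨k, _, rfl⟩; exact k.2
  have hxA : x ∈ A := ⟨xK, mem_connectedComponent, rfl⟩
  refine ⟨A, hACc, hAconn, fun a ha => (hAK ha).1, fun a ha => (hAK ha).2, hxA, ?_⟩
  by_contra hcon
  push_neg at hcon
  -- The component avoids the sphere; extract a clopen neighborhood avoiding it.
  set B : Set ↥K := {k : ↥K | dist x (k : M) = r} with hBdef
  have hBclosed : IsClosed B :=
    isClosed_eq (continuous_const.dist continuous_subtype_val) continuous_const
  have hBC : B ∩ ⋂ s : { s : Set ↥K // IsClopen s ∧ xK ∈ s }, (s : Set ↥K) = ∅ := by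
    rw [← connectedComponent_eq_iInter_isClopen xK]
    ext k
    simp only [mem_inter_iff, mem_empty_iff_false, iff_false, not_and]
    intro hkB hkC
    exact hcon (k : M) ⟨k, hkC, rfl⟩ hkB
  obtain ⟨u, hu⟩ := (hBclosed.isCompact).elim_finite_subfamily_closed
    (fun s : { s : Set ↥K // IsClopen s ∧ xK ∈ s } => (s : Set ↥K))
    (fun s => s.2.1.1) hBC
  set V : Set ↥K := ⋂ s ∈ u, (s : Set ↥K) with hVdef
  have hVclopen : IsClopen V := isClopen_biInter_finset fun s _ => s.2.1
  have hxV : xK ∈ V := mem_iInter₂.mpr fun s _ => s.2.2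
  have hVB : ∀ k ∈ V, dist x (k : M) ≠ r := by
    intro k hk hkr
    have : k ∈ B ∩ ⋂ s ∈ u, (s : Set ↥K) := ⟨hkr, hk⟩
    rw [hu] at this
    exact this
  -- extract open and closed descriptions of V
  obtain ⟨U, hUopen, hUV⟩ := isOpen_induced_iff.mp hVclopen.2
  obtain ⟨F, hFclosed, hFV⟩ := isClosed_induced_iff.mp hVclopen.1
  set V' : Set M := Subtype.val '' V with hV'def
  have hV'U : V' = K ∩ U := by rw [hV'def, ← hUV, Subtype.image_preimage_coe]
  have hV'F : V' = K ∩ F := by rw [hV'def, ← hFV, Subtype.image_preimage_coe]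
  have hV'ball : V' ⊆ ball x r := by
    rintro a ⟨k, hk, rfl⟩
    have h1 : dist x (k : M) ≤ r := by
      have := k.2.2; rwa [mem_closedBall, dist_comm] at this
    have h2 := hVB k hk
    rw [mem_ball, dist_comm]
    exact lt_of_le_of_ne h1 h2
  -- contradiction with connectedness of T
  set U₀ : Set M := U ∩ ball x r with hU₀def
  set U₁ : Set M := Fᶜ ∪ (closedBall x r)ᶜ with hU₁def
  have hU₀open : IsOpen U₀ := hUopen.inter isOpen_ball
  have hU₁open : IsOpen U₁ := (hFclosed.isOpen_compl).union Metric.isClosed_closedBall.isOpen_compl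
  have hTV' : T ∩ U₀ = V' := by
    apply Subset.antisymm
    · rintro a ⟨haT, haU, hab⟩
      rw [hV'U]
      exact ⟨⟨haT, ball_subset_closedBall hab⟩, haU⟩
    · intro a ha
      exact ⟨((hV'F ▸ ha) : a ∈ K ∩ F).1.1, (hV'U ▸ ha : a ∈ K ∩ U).2, hV'ball ha⟩
  have hcover : T ⊆ U₀ ∪ U₁ := by
    intro a haT
    by_cases hab : a ∈ closedBall x r
    · by_cases haF : a ∈ F
      · have haV' : a ∈ V' := by rw [hV'F]; exact ⟨⟨haT, hab⟩, haF⟩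
        exact Or.inl ⟨(hV'U ▸ haV' : a ∈ K ∩ U).2, hV'ball haV'⟩
      · exact Or.inr (Or.inl haF)
    · exact Or.inr (Or.inr hab)
  have hne₀ : (T ∩ U₀).Nonempty := by
    have : x ∈ T ∩ U₀ := by rw [hTV']; exact ⟨xK, hxV, rfl⟩
    exact ⟨x, this⟩
  have hne₁ : (T ∩ U₁).Nonempty := by
    refine ⟨y, hy, Or.inr ?_⟩
    simp only [mem_compl_iff, mem_closedBall]
    rw [dist_comm]; linarith
  obtain ⟨z, hzT, hzU₀, hzU₁⟩ := hTp U₀ U₁ hU₀open hU₁open hcover hne₀ hne₁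
  have hzV' : z ∈ V' := hTV' ▸ ⟨hzT, hzU₀⟩
  rcases hzU₁ with hzF | hzB
  · exact hzF (hV'F ▸ hzV' : z ∈ K ∩ F).2
  · exact hzB (ball_subset_closedBall (hV'ball hzV'))


theorem stmt_5 {M : Type*} [MetricSpace M] [CompactSpace M]
    (φ : ℝ → M → M) (hφ : IsFlow φ) (h : KinematicCwExpansive φ) :
    IsTotallyDisconnected (fixedPoints φ) := by
  obtain ⟨c, hc, hexp⟩ := h
  have hcont : ∀ s : ℝ, Continuous (φ s) := fun s =>
    hφ.continuous.comp (continuous_const.prodMk continuous_id)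
  have hfixclosed : IsClosed (fixedPoints φ) := by
    have : fixedPoints φ = ⋂ s : ℝ, {p | φ s p = p} := by
      ext p; simp [fixedPoints]
    rw [this]
    exact isClosed_iInter fun s => isClosed_eq (hcont s) continuous_id
  intro t hts hpre x hx y hy
  by_contra hxy
  have hdxy : 0 < dist x y := dist_pos.mpr hxy
  set T : Set M := closure t with hTdef
  have hTc : IsCompact T := isClosed_closure.isCompact
  have hTp : IsPreconnected T := hpre.closure
  have hTfix : T ⊆ fixedPoints φ := closure_minimal hts hfixclosed
  set r : ℝ := min (c / 3) (dist x y / 2) with hrdef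
  have hr : 0 < r := lt_min (by linarith) (by linarith)
  have hry : r < dist x y := (min_le_right _ _).trans_lt (by linarith)
  obtain ⟨A, hAc, hAconn, hAT, hAball, hxA, z, hzA, hzr⟩ :=
    bump_aux hTc hTp (subset_closure hx) (subset_closure hy) hr hry
  have hAfix : ∀ a ∈ A, ∀ s : ℝ, φ s a = a := fun a ha => hTfix (hAT ha)
  have hdiam : ∀ s : ℝ, Metric.diam ((fun w => φ s w) '' A) < c := by
    intro s
    have himg : (fun w => φ s w) '' A = A := by
      rw [Set.image_congr (g := id) (fun a ha => hAfix a ha s), Set.image_id]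
    rw [himg]
    have h1 : Metric.diam A ≤ 2 * r :=
      (Metric.diam_mono hAball isBounded_closedBall).trans (Metric.diam_closedBall hr.le)
    have h2 : r ≤ c / 3 := min_le_left _ _
    linarith
  obtain ⟨p, I, hI, hAeq⟩ := hexp A ⟨hAc, hAconn⟩ hdiam
  -- x and z are both on the orbit of p, but all points of A are fixed, so x = z
  obtain ⟨s₀, _, hs₀⟩ : ∃ s₀ ∈ I, φ s₀ p = x := by
    have := hAeq ▸ hxA; exact this
  obtain ⟨s₁, _, hs₁⟩ : ∃ s₁ ∈ I, φ s₁ p = z := by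
    have := hAeq ▸ hzA; exact this
  have hpx : p = x := by
    calc p = φ (-s₀ + s₀) p := by rw [neg_add_cancel, hφ.map_zero]
    _ = φ (-s₀) (φ s₀ p) := hφ.map_add _ _ _
    _ = φ (-s₀) x := by rw [hs₀]
    _ = x := hAfix x hxA _
  have hzx : z = x := by rw [← hs₁, hpx, hAfix x hxA]
  rw [hzx, dist_self] at hzr
  exact absurd hzr.symm hr.ne'
end

section
/- Let φ be a flow on a compact metric space (M,d) that is kinematic cw-expansive with expansivity constant c > 0. Then there is no singular connection of diameter smaller than c; that is, there is no point x ∉ fix(φ) such that both limits lim_{t→+∞} φ_t(x) and lim_{t→−∞} φ_t(x) exist and are fixed points of φ and diam(φ_ℝ(x)) < c. -/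
open Set Metric Filter

theorem stmt_6 {M : Type*} [MetricSpace M] [CompactSpace M]
    (φ : ℝ → M → M) (hφ : IsFlow φ) (c : ℝ) (hc : 0 < c)
    (h : KinematicCwExpansiveWith φ c) :
    ¬ ∃ (x p q : M), x ∉ fixedPoints φ ∧ p ∈ fixedPoints φ ∧ q ∈ fixedPoints φ ∧
        Filter.Tendsto (fun t => φ t x) Filter.atTop (nhds p) ∧
        Filter.Tendsto (fun t => φ t x) Filter.atBot (nhds q) ∧
        Metric.diam (Set.range fun t => φ t x) < c := by
  rintro ⟨x, p, q, hx, hp, _hq, hpt, _hqt, hdiam⟩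
  set O : Set M := Set.range fun t => φ t x with hO
  have hcont : Continuous fun t : ℝ => φ t x :=
    hφ.continuous.comp (continuous_id.prodMk continuous_const)
  set A := closure O with hA
  have hOconn : IsConnected O := isConnected_range hcont
  have hAcont : IsContinuum A := ⟨isClosed_closure.isCompact, hOconn.closure⟩
  have hdiamA : Metric.diam A < c := by rwa [hA, Metric.diam_closure]
  have hinv : ∀ t, (fun y => φ t y) '' A ⊆ A := by
    intro t
    have h1 : (fun y => φ t y) '' O ⊆ O := by
      rintro _ ⟨_, ⟨s, rfl⟩, rfl⟩
      exact ⟨t + s, show φ (t + s) x = φ t (φ s x) from hφ.map_add t s x⟩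
    calc (fun y => φ t y) '' A ⊆ closure ((fun y => φ t y) '' O) :=
          image_closure_subset_closure_image
            (hφ.continuous.comp (continuous_const.prodMk continuous_id))
      _ ⊆ closure O := closure_mono h1
  obtain ⟨y, I, _hI, hAI⟩ := h A hAcont (fun t =>
    lt_of_le_of_lt (Metric.diam_mono (hinv t) hAcont.1.isBounded) hdiamA)
  have hpA : p ∈ A :=
    mem_closure_of_tendsto hpt (Filter.Eventually.of_forall fun t => ⟨t, rfl⟩)
  rw [hAI] at hpA
  obtain ⟨s, _hs, hsy⟩ := hpA
  change φ s y = p at hsy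
  have hyp : y = p := by
    have : φ (-s + s) y = φ (-s) (φ s y) := hφ.map_add (-s) s y
    rw [neg_add_cancel, hφ.map_zero, hsy, hp (-s)] at this
    exact this
  have hxA : x ∈ A := subset_closure ⟨0, hφ.map_zero x⟩
  rw [hAI] at hxA
  obtain ⟨t, _ht, hty⟩ := hxA
  change φ t y = x at hty
  rw [hyp, hp t] at hty
  exact hx (hty ▸ hp)
end

section
/- Let φ be a kinematic cw-expansive flow on a compact metric space (M,d). Then there exists an open set U ⊆ M containing fix(φ) such that every x ∈ U ∖ fix(φ) whose full orbit φ_ℝ(x) is contained in U ∖ fix(φ) is a periodic point, i.e., there exists T > 0 with φ_T(x) = x. -/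
open Set Metric Filter

namespace Stmt7
section Aux
set_option linter.unusedSectionVars false
set_option linter.unusedVariables false
variable {M : Type*} [MetricSpace M] {φ : ℝ → M → M}

lemma cont_t (hφ : IsFlow φ) (t : ℝ) : Continuous (φ t) :=
  hφ.continuous.comp (continuous_const.prodMk continuous_id)

lemma cont_orbit (hφ : IsFlow φ) (x : M) : Continuous (fun t => φ t x) :=
  hφ.continuous.comp (continuous_id.prodMk continuous_const)

lemma cancel (hφ : IsFlow φ) (t : ℝ) (x : M) : φ (-t) (φ t x) = x := by
  rw [← hφ.map_add, neg_add_cancel, hφ.map_zero]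

/-- time-t map as a homeomorphism -/
def flowHomeo (hφ : IsFlow φ) (t : ℝ) : M ≃ₜ M where
  toFun := φ t
  invFun := φ (-t)
  left_inv := fun x => cancel hφ t x
  right_inv := fun x => by simpa using cancel hφ (-t) x
  continuous_toFun := cont_t hφ t
  continuous_invFun := cont_t hφ (-t)

lemma fix_closed (hφ : IsFlow φ) : IsClosed (fixedPoints φ) := by
  have : fixedPoints φ = ⋂ t : ℝ, {x | φ t x = x} := by
    ext x; simp [fixedPoints]
  rw [this]
  exact isClosed_iInter fun t => isClosed_eq (cont_t hφ t) continuous_id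

lemma seg_subsingleton (hφ : IsFlow φ) {S : Set M} {I : Set ℝ} {z : M}
    (hS : S = (fun t => φ t z) '' I) (hfix : S ⊆ fixedPoints φ) : S.Subsingleton := by
  rintro a ha b hb
  rw [hS] at ha hb
  obtain ⟨s, hs, rfl⟩ := ha
  obtain ⟨t, ht, rfl⟩ := hb
  have hfa : φ s z ∈ fixedPoints φ := hfix (by rw [hS]; exact ⟨s, hs, rfl⟩)
  have : φ (t - s) (φ s z) = φ t z := by rw [← hφ.map_add]; ring_nf
  rw [hfa (t - s)] at this
  exact this

lemma image_fix {K : Set M} (hK : K ⊆ fixedPoints φ) (t : ℝ) :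
    φ t '' K = K := by
  ext y
  constructor
  · rintro ⟨a, ha, rfl⟩; rwa [hK ha t]
  · intro hy; exact ⟨y, hy, hK hy t⟩

/-- Boundary bumping, weak form: in a compact connected metric space with two distinct
points, there is a nondegenerate small continuum at `p`. -/
lemma exists_small_continuum {X : Type*} [MetricSpace X] [CompactSpace X] [ConnectedSpace X]
    (p q : X) (hpq : p ≠ q) {ε : ℝ} (hε : 0 < ε) (hεd : ε < dist p q) :
    ∃ K : Set X, IsCompact K ∧ IsConnected K ∧ p ∈ K ∧ K ⊆ closedBall p ε ∧
      ∃ y ∈ K, y ≠ p := by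
  set D : Set X := closedBall p ε with hD
  have hpD : p ∈ D := mem_closedBall_self hε.le
  have hqD : q ∉ D := by
    simp only [hD, mem_closedBall] at *
    rw [dist_comm]; exact not_le.mpr hεd
  have hDclosed : IsClosed D := isClosed_closedBall
  have hDcomp : IsCompact D := hDclosed.isCompact
  set K : Set X := connectedComponentIn D p with hK
  have hKsub : K ⊆ D := connectedComponentIn_subset D p
  have hKconn : IsConnected K := (isConnected_connectedComponentIn_iff).mpr hpD
  have hpK : p ∈ K := mem_connectedComponentIn hpD
  haveI : CompactSpace D := isCompact_iff_compactSpace.mp hDcomp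
  have hKimg : K = Subtype.val '' connectedComponent (⟨p, hpD⟩ : D) :=
    connectedComponentIn_eq_image hpD
  have hKcomp : IsCompact K := by
    rw [hKimg]
    exact (isClosed_connectedComponent.isCompact).image continuous_subtype_val
  by_cases hfr : (K ∩ frontier D).Nonempty
  · obtain ⟨y, hyK, hyfr⟩ := hfr
    have hy : dist y p = ε := by
      have := frontier_closedBall_subset_sphere hyfr
      simpa [mem_sphere] using this
    exact ⟨K, hKcomp, hKconn, hpK, hKsub, y, hyK, fun h => by
      rw [h, dist_self] at hy; exact hε.ne' hy.symm⟩
  · -- no frontier contact: derive a contradiction via a clopen set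
    exfalso
    rw [not_nonempty_iff_eq_empty] at hfr
    set B' : Set D := Subtype.val ⁻¹' (frontier D) with hB'
    have hB'closed : IsClosed B' := (isClosed_frontier).preimage continuous_subtype_val
    have hB'comp : IsCompact B' := hB'closed.isCompact
    have hccB' : B' ∩ ⋂ (Z : {Z : Set D // IsClopen Z ∧ (⟨p, hpD⟩ : D) ∈ Z}), (Z : Set D) = ∅ := by
      rw [← connectedComponent_eq_iInter_isClopen]
      ext z
      simp only [mem_inter_iff, mem_empty_iff_false, iff_false, not_and]
      intro hzB hzc
      have : (z : X) ∈ K ∩ frontier D := by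
        refine ⟨?_, hzB⟩
        rw [hKimg]; exact ⟨z, hzc, rfl⟩
      rw [hfr] at this; exact this
    obtain ⟨t, ht⟩ := hB'comp.elim_finite_subfamily_closed _ (fun Z => Z.2.1.isClosed) hccB'
    set V : Set D := ⋂ Z ∈ t, (Z : Set D) with hV
    have hVclopen : IsClopen V := isClopen_biInter_finset (fun Z _ => Z.2.1)
    have hz₀V : (⟨p, hpD⟩ : D) ∈ V := by
      simp only [hV, mem_iInter]
      exact fun Z _ => Z.2.2
    have hVB' : V ∩ B' = ∅ := by
      rw [inter_comm]; exact ht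
    set Vx : Set X := Subtype.val '' V with hVx
    have hVxD : Vx ⊆ D := by
      rintro _ ⟨z, _, rfl⟩; exact z.2
    have hpVx : p ∈ Vx := ⟨⟨p, hpD⟩, hz₀V, rfl⟩
    have hVxclosed : IsClosed Vx :=
      ((hVclopen.isClosed.isCompact).image continuous_subtype_val).isClosed
    have hVxfr : ∀ y ∈ Vx, y ∉ frontier D := by
      rintro _ ⟨z, hz, rfl⟩ hfr'
      have : z ∈ V ∩ B' := ⟨hz, hfr'⟩
      rw [hVB'] at this; exact this
    have hVxint : Vx ⊆ interior D := by
      intro y hy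
      have hyD : y ∈ D := hVxD hy
      have : y ∉ frontier D := hVxfr y hy
      rw [hDclosed.frontier_eq] at this
      simp only [mem_diff, not_and, not_not] at this
      exact this hyD
    have hVxopen : IsOpen Vx := by
      obtain ⟨Wo, hWo, hpre⟩ := isOpen_induced_iff.mp hVclopen.isOpen
      have : Vx = Wo ∩ interior D := by
        apply Subset.antisymm
        · intro y hy
          refine ⟨?_, hVxint hy⟩
          obtain ⟨z, hz, rfl⟩ := hy
          rw [← hpre] at hz; exact hz
        · intro y ⟨hyW, hyint⟩
          have hyD : y ∈ D := interior_subset hyint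
          refine ⟨⟨y, hyD⟩, ?_, rfl⟩
          rw [← hpre]; exact hyW
      rw [this]; exact hWo.inter isOpen_interior
    have : Vx = univ := IsClopen.eq_univ ⟨hVxclosed, hVxopen⟩ ⟨p, hpVx⟩
    exact hqD (hVxD (this ▸ mem_univ q))

lemma no_injective_compact_orbit {M : Type*} [MetricSpace M] {φ : ℝ → M → M} (hφ : IsFlow φ)
    (x : M) {K : Set M} (hKdef : ∀ y, y ∈ K ↔ ∃ t : ℝ, φ t x = y) (hKcomp : IsCompact K)
    (hinj : Function.Injective (fun t : ℝ => φ t x)) : False := by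
  classical
  haveI : CompactSpace ↥K := isCompact_iff_compactSpace.mp hKcomp
  haveI : Nonempty ↥K := ⟨⟨x, (hKdef x).mpr ⟨0, hφ.map_zero x⟩⟩⟩
  have hC : ∀ m : ℕ, IsCompact ((fun t : ℝ => φ t x) '' Icc (-(m:ℝ)) m) :=
    fun m => isCompact_Icc.image (cont_orbit hφ x)
  obtain ⟨m, z₀, hz₀⟩ := nonempty_interior_of_iUnion_of_closed
    (f := fun m : ℕ => (Subtype.val ⁻¹'
        ((fun t : ℝ => φ t x) '' Icc (-(m:ℝ)) m) : Set ↥K))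
    (fun m => ((hC m).isClosed).preimage continuous_subtype_val)
    (by
      ext z
      simp only [mem_iUnion, mem_univ, iff_true, mem_preimage]
      obtain ⟨t, ht⟩ := (hKdef (z : M)).mp z.2
      obtain ⟨m, hm⟩ := exists_nat_ge |t|
      exact ⟨m, t, ⟨by linarith [neg_abs_le t], by linarith [le_abs_self t]⟩, ht⟩)
  obtain ⟨Wo, hWoopen, hWoeq⟩ := isOpen_induced_iff.mp
    (isOpen_interior (s := (Subtype.val ⁻¹'
        ((fun t : ℝ => φ t x) '' Icc (-(m:ℝ)) m) : Set ↥K)))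
  obtain ⟨t₀, ht₀I, ht₀pre⟩ := interior_subset hz₀
  have ht₀ : φ t₀ x = (z₀ : M) := ht₀pre
  have hz₀Wo : (z₀ : M) ∈ Wo := by
    have : z₀ ∈ Subtype.val ⁻¹' Wo := by rw [hWoeq]; exact hz₀
    exact this
  have hWoK : ∀ y ∈ Wo, y ∈ K → y ∈ (fun t : ℝ => φ t x) '' Icc (-(m:ℝ)) m := by
    intro y hyW hyK
    have h2 : (⟨y, hyK⟩ : ↥K) ∈ Subtype.val ⁻¹' Wo := hyW
    rw [hWoeq] at h2
    have h3 : (⟨y, hyK⟩ : ↥K) ∈ (Subtype.val ⁻¹'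
        ((fun t : ℝ => φ t x) '' Icc (-(m:ℝ)) m) : Set ↥K) := interior_subset h2
    exact h3
  -- the open cover of K in M
  have hVoopen : ∀ s : ℝ, IsOpen ((φ (t₀ - s)) ⁻¹' Wo) :=
    fun s => hWoopen.preimage (cont_t hφ (t₀ - s))
  have hKinv : ∀ (r : ℝ) (y : M), y ∈ K → φ r y ∈ K := by
    intro r y hy
    obtain ⟨t, ht⟩ := (hKdef y).mp hy
    exact (hKdef _).mpr ⟨r + t, by rw [hφ.map_add, ht]⟩
  have hcover : K ⊆ ⋃ s : ℝ, (φ (t₀ - s)) ⁻¹' Wo := by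
    intro y hy
    obtain ⟨s, hs⟩ := (hKdef y).mp hy
    refine mem_iUnion.mpr ⟨s, ?_⟩
    show φ (t₀ - s) y ∈ Wo
    rw [← hs, ← hφ.map_add]
    have he : t₀ - s + s = t₀ := by ring
    rw [he, ht₀]
    exact hz₀Wo
  have hVosub : ∀ s : ℝ, ∀ y ∈ (φ (t₀ - s)) ⁻¹' Wo, y ∈ K →
      ∃ u ∈ Icc (s - t₀ - (m:ℝ)) (s - t₀ + m), φ u x = y := by
    intro s y hyV hyK
    have h1 : φ (t₀ - s) y ∈ K := hKinv _ _ hyK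
    obtain ⟨t, htI, htpre⟩ := hWoK _ hyV h1
    have ht : φ t x = φ (t₀ - s) y := htpre
    refine ⟨s - t₀ + t, ⟨by linarith [htI.1], by linarith [htI.2]⟩, ?_⟩
    have h2 : φ (s - t₀) (φ (t₀ - s) y) = y := by
      rw [← hφ.map_add]
      have h0 : s - t₀ + (t₀ - s) = 0 := by ring
      rw [h0, hφ.map_zero]
    calc φ (s - t₀ + t) x = φ (s - t₀) (φ t x) := hφ.map_add _ _ _
      _ = φ (s - t₀) (φ (t₀ - s) y) := by rw [ht]
      _ = y := h2
  obtain ⟨S, hS⟩ := hKcomp.elim_finite_subcover _ hVoopen hcover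
  obtain ⟨R, hR⟩ : ∃ R : ℝ, ∀ s ∈ S, |s - t₀| + m ≤ R := by
    obtain ⟨R, hR⟩ := (S.finite_toSet.image (fun s => |s - t₀| + m)).bddAbove
    exact ⟨R, fun s hs => hR (mem_image_of_mem _ (by exact_mod_cast hs))⟩
  have hmem : φ (R + 1) x ∈ K := (hKdef _).mpr ⟨R + 1, rfl⟩
  obtain ⟨s', hs'S, hs'V⟩ := mem_iUnion₂.mp (hS hmem)
  obtain ⟨u, huI, hu⟩ := hVosub s' _ hs'V hmem
  have hu2 : u = R + 1 := hinj hu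
  have hub : u ≤ R := by
    calc u ≤ s' - t₀ + m := huI.2
      _ ≤ |s' - t₀| + m := by linarith [le_abs_self (s' - t₀)]
      _ ≤ R := hR s' hs'S
  rw [hu2] at hub
  linarith

variable [CompactSpace M]

lemma fix_td (hφ : IsFlow φ) {c : ℝ} (hc : 0 < c) (hexp : KinematicCwExpansiveWith φ c) :
    IsTotallyDisconnected (fixedPoints φ) := by
  intro s hs hconn
  intro p hp q hq
  by_contra hpq
  set C : Set M := closure s with hC
  have hCfix : C ⊆ fixedPoints φ := closure_minimal hs (fix_closed hφ)
  have hpC : p ∈ C := subset_closure hp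
  have hqC : q ∈ C := subset_closure hq
  have hCconn : IsConnected C := ⟨⟨p, hpC⟩, hconn.closure⟩
  have hCcomp : IsCompact C := isClosed_closure.isCompact
  haveI : CompactSpace ↥C := isCompact_iff_compactSpace.mp hCcomp
  haveI : ConnectedSpace ↥C := Subtype.connectedSpace hCconn
  set p' : ↥C := ⟨p, hpC⟩
  set q' : ↥C := ⟨q, hqC⟩
  have hpq' : p' ≠ q' := fun hh => hpq (congrArg Subtype.val hh)
  have hd : dist p' q' = dist p q := Subtype.dist_eq p' q'
  have hdpos : 0 < dist p q := dist_pos.mpr hpq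
  set ε : ℝ := min c (dist p q) / 3 with hε
  have hεpos : 0 < ε := by positivity
  have hεd : ε < dist p' q' := by
    rw [hd]
    calc ε ≤ dist p q / 3 := by
          apply div_le_div_of_nonneg_right ?_ (by norm_num)
          · exact min_le_right _ _
      _ < dist p q := by linarith
  obtain ⟨K, hKcomp, hKconn, hpK, hKball, y, hyK, hyp⟩ :=
    exists_small_continuum p' q' hpq' hεpos hεd
  set KM : Set M := Subtype.val '' K with hKM
  have hKMfix : KM ⊆ fixedPoints φ := by
    rintro _ ⟨z, _, rfl⟩; exact hCfix z.2
  have hKMcomp : IsCompact KM := hKcomp.image continuous_subtype_val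
  have hKMconn : IsConnected KM := hKconn.image _ continuous_subtype_val.continuousOn
  have hKMdiam : Metric.diam KM ≤ 2 * ε := by
    apply Metric.diam_le_of_forall_dist_le (by positivity)
    rintro _ ⟨z1, hz1, rfl⟩ _ ⟨z2, hz2, rfl⟩
    have e1 : dist (z1 : M) (z2 : M) = dist z1 z2 := (Subtype.dist_eq z1 z2).symm
    rw [e1]
    calc dist z1 z2 ≤ dist z1 p' + dist p' z2 := dist_triangle _ _ _
      _ ≤ ε + ε := add_le_add (hKball hz1) (by rw [dist_comm]; exact hKball hz2)
      _ = 2 * ε := by ring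
  have hεc : 2 * ε < c := by
    have : ε ≤ c / 3 := by
      rw [hε]
      apply div_le_div_of_nonneg_right (min_le_left _ _) (by norm_num)
    linarith
  obtain ⟨z, I, hI, hEq⟩ := hexp KM ⟨hKMcomp, hKMconn⟩ (fun t => by
    rw [show (fun x => φ t x) '' KM = KM from image_fix hKMfix t]
    exact lt_of_le_of_lt hKMdiam hεc)
  have hsub := seg_subsingleton hφ hEq hKMfix
  have : (y : M) = (p' : M) := hsub ⟨y, hyK, rfl⟩ ⟨p', hpK, rfl⟩
  exact hyp (Subtype.ext this)

lemma diam_thickening_le {s : Set M} {δ : ℝ} (hδ : 0 < δ) :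
    Metric.diam (thickening δ s) ≤ Metric.diam s + 2 * δ := by
  apply Metric.diam_le_of_forall_dist_le
    (add_nonneg Metric.diam_nonneg (by positivity))
  intro a ha b hb
  obtain ⟨za, hza, hda⟩ := mem_thickening_iff.mp ha
  obtain ⟨zb, hzb, hdb⟩ := mem_thickening_iff.mp hb
  have hzz : dist za zb ≤ Metric.diam s :=
    Metric.dist_le_diam_of_mem (isCompact_univ.isBounded.subset (subset_univ s)) hza hzb
  calc dist a b ≤ dist a za + dist za zb + dist zb b := dist_triangle4 a za zb b
    _ ≤ δ + Metric.diam s + δ := by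
        refine add_le_add (add_le_add hda.le hzz) ?_
        rw [dist_comm]; exact hdb.le
    _ = Metric.diam s + 2 * δ := by ring

lemma exists_delta {n : ℕ} (W : Fin n → Set M) (hcomp : ∀ i, IsCompact (W i))
    (hdisj : Pairwise (Function.onFun Disjoint W)) :
    ∃ δ > 0, Pairwise (Function.onFun Disjoint (fun i => thickening δ (W i))) := by
  have H : ∀ pr : Fin n × Fin n, ∃ δ, 0 < δ ∧
      (pr.1 ≠ pr.2 → Disjoint (thickening δ (W pr.1)) (thickening δ (W pr.2))) := by
    rintro ⟨i, j⟩
    by_cases hij : i = j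
    · exact ⟨1, one_pos, fun h => absurd hij h⟩
    · obtain ⟨δ, hδ, hd⟩ := (hdisj hij).exists_thickenings (hcomp i) (hcomp j).isClosed
      exact ⟨δ, hδ, fun _ => hd⟩
  choose g hg1 hg2 using H
  classical
  set F : Finset ℝ := insert 1 (Finset.univ.image g) with hF
  have hFne : F.Nonempty := ⟨1, Finset.mem_insert_self _ _⟩
  refine ⟨F.min' hFne, ?_, ?_⟩
  · have hmem := Finset.mem_insert.mp (F.min'_mem hFne)
    rcases hmem with h1 | h2
    · rw [h1]; exact one_pos
    · obtain ⟨pr, _, hpr⟩ := Finset.mem_image.mp h2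
      rw [← hpr]; exact hg1 pr
  · intro i j hij
    have hle : F.min' hFne ≤ g (i, j) :=
      F.min'_le _ (Finset.mem_insert_of_mem (Finset.mem_image_of_mem g (Finset.mem_univ _)))
    exact (hg2 (i, j) hij).mono (thickening_mono hle _) (thickening_mono hle _)

lemma preconn_subset {n : ℕ} (V : Fin n → Set M) (hV : ∀ i, IsOpen (V i))
    (hd : Pairwise (Function.onFun Disjoint V)) {A : Set M} (hA : IsPreconnected A)
    (hsub : A ⊆ ⋃ i, V i) (hne : A.Nonempty) : ∃ i, A ⊆ V i := by
  obtain ⟨a, ha⟩ := hne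
  obtain ⟨i₀, hi₀⟩ := mem_iUnion.mp (hsub ha)
  refine ⟨i₀, ?_⟩
  have hdisj2 : Disjoint (V i₀) (⋃ j, ⋃ (_ : j ≠ i₀), V j) := by
    rw [disjoint_iUnion_right]
    intro j
    rw [disjoint_iUnion_right]
    intro hj
    exact hd (Ne.symm hj)
  apply hA.subset_left_of_subset_union (hV i₀)
    (isOpen_iUnion (fun j => isOpen_iUnion fun _ => hV j)) hdisj2 ?_ ⟨a, ha, hi₀⟩
  intro y hy
  obtain ⟨j, hj⟩ := mem_iUnion.mp (hsub hy)
  by_cases hji : j = i₀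
  · exact Or.inl (hji ▸ hj)
  · exact Or.inr (mem_iUnion.mpr ⟨j, mem_iUnion.mpr ⟨hji, hj⟩⟩)

lemma exists_clopen_partition {F : Set M} (hFclosed : IsClosed F)
    (htd : IsTotallyDisconnected F) {ε : ℝ} (hε : 0 < ε) :
    ∃ (n : ℕ) (W : Fin n → Set M), (∀ i, IsCompact (W i)) ∧ (∀ i, W i ⊆ F) ∧
      Pairwise (Function.onFun Disjoint W) ∧ (F ⊆ ⋃ i, W i) ∧
      ∀ i, Metric.diam (W i) ≤ ε := by
  classical
  haveI : CompactSpace ↥F := isCompact_iff_compactSpace.mp hFclosed.isCompact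
  haveI : TotallyDisconnectedSpace ↥F := (totallyDisconnectedSpace_subtype_iff).mpr htd
  have hV : ∀ z : ↥F, ∃ V : Set ↥F, IsClopen V ∧ z ∈ V ∧
      V ⊆ Subtype.val ⁻¹' (ball (z : M) (ε / 2)) := fun z =>
    compact_exists_isClopen_in_isOpen
      (isOpen_ball.preimage continuous_subtype_val) (by simp [hε])
  choose V hVclopen hVmem hVball using hV
  obtain ⟨T, hT⟩ := isCompact_univ.elim_finite_subcover V (fun z => (hVclopen z).isOpen)
    (fun z _ => mem_iUnion.mpr ⟨z, hVmem z⟩)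
  set n := T.card with hn
  set e := T.equivFin with he
  set Vi : Fin n → Set ↥F := fun i => V ((e.symm i) : ↥F) with hVi
  have hViclopen : ∀ i, IsClopen (Vi i) := fun i => hVclopen _
  have hcover : ∀ z : ↥F, ∃ i, z ∈ Vi i := by
    intro z
    obtain ⟨w, hw⟩ := mem_iUnion.mp (hT (mem_univ z))
    obtain ⟨hwT, hzw⟩ := mem_iUnion.mp hw
    refine ⟨e ⟨w, hwT⟩, ?_⟩
    rw [hVi]; simp only [Equiv.symm_apply_apply]; exact hzw
  set Wsub : Fin n → Set ↥F := fun i => Vi i \ ⋃ j, ⋃ (_ : j < i), Vi j with hWsub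
  have hWsubclosed : ∀ i, IsClosed (Wsub i) :=
    fun i => (hViclopen i).isClosed.sdiff
      (isOpen_iUnion fun j => isOpen_iUnion fun _ => (hViclopen j).isOpen)
  refine ⟨n, fun i => Subtype.val '' Wsub i, ?_, ?_, ?_, ?_, ?_⟩
  · exact fun i => ((hWsubclosed i).isCompact).image continuous_subtype_val
  · rintro i _ ⟨z, _, rfl⟩; exact z.2
  · have key : ∀ i j : Fin n, i < j → Disjoint (Wsub i) (Wsub j) := by
      intro i j hij
      rw [Set.disjoint_left]
      rintro z ⟨hzi, -⟩ ⟨-, hzn⟩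
      exact hzn (mem_iUnion.mpr ⟨i, mem_iUnion.mpr ⟨hij, hzi⟩⟩)
    intro i j hij
    rcases lt_or_gt_of_ne hij with h | h
    · exact (Set.disjoint_image_iff Subtype.val_injective).mpr (key i j h)
    · exact ((Set.disjoint_image_iff Subtype.val_injective).mpr (key j i h)).symm
  · intro x hx
    set z : ↥F := ⟨x, hx⟩
    set P := Finset.univ.filter (fun i => z ∈ Vi i) with hP
    have hPne : P.Nonempty := by
      obtain ⟨i, hi⟩ := hcover z
      exact ⟨i, Finset.mem_filter.mpr ⟨Finset.mem_univ _, hi⟩⟩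
    set i₀ := P.min' hPne
    have hi₀ : z ∈ Vi i₀ := (Finset.mem_filter.mp (P.min'_mem hPne)).2
    have hmin : z ∉ ⋃ j, ⋃ (_ : j < i₀), Vi j := by
      rw [mem_iUnion]
      rintro ⟨j, hj⟩
      rw [mem_iUnion] at hj
      obtain ⟨hji, hzj⟩ := hj
      exact absurd (P.min'_le j (Finset.mem_filter.mpr ⟨Finset.mem_univ _, hzj⟩))
        (not_le.mpr hji)
    exact mem_iUnion.mpr ⟨i₀, ⟨z, ⟨hi₀, hmin⟩, rfl⟩⟩
  · intro i
    have hsubball : Subtype.val '' Wsub i ⊆ ball ((e.symm i : ↥F) : M) (ε / 2) := by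
      rintro _ ⟨z, hz, rfl⟩
      exact hVball _ hz.1
    calc Metric.diam (Subtype.val '' Wsub i) ≤ Metric.diam (ball ((e.symm i : ↥F) : M) (ε / 2)) :=
          Metric.diam_mono hsubball isBounded_ball
      _ ≤ 2 * (ε / 2) := Metric.diam_ball (by positivity)
      _ = ε := by ring

end Aux
end Stmt7

theorem stmt_7 {M : Type*} [MetricSpace M] [CompactSpace M]
    (φ : ℝ → M → M) (hφ : IsFlow φ) (h : KinematicCwExpansive φ) :
    ∃ U : Set M, IsOpen U ∧ fixedPoints φ ⊆ U ∧
      ∀ x ∈ U \ fixedPoints φ,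
        (Set.range fun t => φ t x) ⊆ U \ fixedPoints φ →
        ∃ T > (0:ℝ), φ T x = x := by
  classical
  obtain ⟨c, hc, hexp⟩ := h
  have htd := Stmt7.fix_td hφ hc hexp
  obtain ⟨n, W, hWcomp, hWfix, hWdisj, hWcover, hWdiam⟩ :=
    Stmt7.exists_clopen_partition (Stmt7.fix_closed hφ) htd (show (0:ℝ) < c/4 by linarith)
  obtain ⟨δ₀, hδ₀, hδdisj⟩ := Stmt7.exists_delta W hWcomp hWdisj
  obtain ⟨δ, hδpos, hδle, hδc⟩ : ∃ δ : ℝ, 0 < δ ∧ δ ≤ δ₀ ∧ δ ≤ c/8 :=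
    ⟨min δ₀ (c/8), lt_min hδ₀ (by linarith), min_le_left _ _, min_le_right _ _⟩
  refine ⟨⋃ i, thickening (δ/2) (W i), isOpen_iUnion fun i => isOpen_thickening, ?_, ?_⟩
  · intro x hx
    obtain ⟨i, hi⟩ := mem_iUnion.mp (hWcover hx)
    exact mem_iUnion.mpr ⟨i, self_subset_thickening (by positivity) _ hi⟩
  intro x hx horb
  obtain ⟨hxU, hxfix⟩ := hx
  have hfcont : Continuous (fun t => φ t x) := Stmt7.cont_orbit hφ x
  have hAcomp : IsCompact (closure (Set.range fun t => φ t x)) :=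
    isClosed_closure.isCompact
  have hxA : x ∈ closure (Set.range fun t => φ t x) :=
    subset_closure ⟨0, hφ.map_zero x⟩
  have hAconn : IsConnected (closure (Set.range fun t => φ t x)) :=
    (isConnected_range hfcont).closure
  have hAsub : closure (Set.range fun t => φ t x) ⊆ ⋃ i, thickening δ (W i) := by
    have h1 : closure (Set.range fun t => φ t x) ⊆ ⋃ i, cthickening (δ/2) (W i) := by
      apply closure_minimal ?_ (isClosed_iUnion_of_finite fun i => isClosed_cthickening)
      intro y hy
      obtain ⟨i, hi⟩ := mem_iUnion.mp ((horb hy).1)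
      exact mem_iUnion.mpr ⟨i, thickening_subset_cthickening _ _ hi⟩
    refine h1.trans (iUnion_mono fun i => ?_)
    exact cthickening_subset_thickening' hδpos (by linarith) _
  have hdisjδ : Pairwise (Function.onFun Disjoint (fun i => thickening δ (W i))) :=
    fun i j hij => ((hδdisj hij).mono (thickening_mono hδle _) (thickening_mono hδle _))
  obtain ⟨i, hAi⟩ := Stmt7.preconn_subset _ (fun i => isOpen_thickening)
    hdisjδ hAconn.isPreconnected hAsub ⟨x, hxA⟩
  have hAdiam : Metric.diam (closure (Set.range fun t => φ t x)) < c := by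
    calc Metric.diam (closure (Set.range fun t => φ t x))
        ≤ Metric.diam (thickening δ (W i)) :=
          Metric.diam_mono hAi (isCompact_univ.isBounded.subset (subset_univ _))
      _ ≤ Metric.diam (W i) + 2*δ := Stmt7.diam_thickening_le hδpos
      _ ≤ c/4 + 2*(c/8) := by have := hWdiam i; linarith
      _ < c := by linarith
  have hAinv : ∀ t, (fun y => φ t y) '' (closure (Set.range fun s => φ s x)) =
      closure (Set.range fun s => φ s x) := by
    intro t
    have h1 : φ t '' (Set.range fun s => φ s x) = Set.range fun s => φ s x := by
      ext y
      constructor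
      · rintro ⟨w, ⟨s, rfl⟩, rfl⟩
        refine ⟨t + s, ?_⟩
        show φ (t + s) x = φ t (φ s x)
        exact hφ.map_add t s x
      · rintro ⟨s, rfl⟩
        refine ⟨φ (s - t) x, ⟨s - t, rfl⟩, ?_⟩
        show φ t (φ (s - t) x) = φ s x
        rw [← hφ.map_add]
        ring_nf
    calc (fun y => φ t y) '' (closure (Set.range fun s => φ s x))
        = (Stmt7.flowHomeo hφ t) '' closure (Set.range fun s => φ s x) := rfl
      _ = closure ((Stmt7.flowHomeo hφ t) '' (Set.range fun s => φ s x)) :=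
          ((Stmt7.flowHomeo hφ t).image_closure _)
      _ = closure (Set.range fun s => φ s x) := by
          rw [show ⇑(Stmt7.flowHomeo hφ t) = φ t from rfl, h1]
  obtain ⟨y, I, hIoc, hAeq⟩ := hexp (closure (Set.range fun t => φ t x))
    ⟨hAcomp, hAconn⟩ (fun t => by rw [hAinv t]; exact hAdiam)
  have hxA2 : x ∈ (fun t => φ t y) '' I := by rw [← hAeq]; exact hxA
  obtain ⟨s, hsI, hsy⟩ := hxA2
  have hsy' : φ s y = x := hsy
  have hyx : y = φ (-s) x := by rw [← hsy', Stmt7.cancel hφ]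
  have hAsuborbit : closure (Set.range fun t => φ t x) ⊆ Set.range fun t => φ t x := by
    rw [hAeq]
    rintro _ ⟨t, htI, rfl⟩
    refine ⟨t + -s, ?_⟩
    show φ (t + -s) x = φ t y
    rw [hyx, hφ.map_add]
  have hKcomp : IsCompact (Set.range fun t => φ t x) := by
    have : (Set.range fun t => φ t x) = closure (Set.range fun t => φ t x) :=
      Subset.antisymm subset_closure hAsuborbit
    rw [this]
    exact hAcomp
  by_contra hnp
  push_neg at hnp
  have hinj : Function.Injective (fun t : ℝ => φ t x) := by
    intro a b hab
    have hab' : φ a x = φ b x := hab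
    by_contra hne
    have hxx : x = φ (b - a) x := by
      have h1 : φ (-a) (φ a x) = φ (-a) (φ b x) := by rw [hab']
      rw [Stmt7.cancel hφ] at h1
      have h2 : φ (-a) (φ b x) = φ (b - a) x := by
        rw [← hφ.map_add]
        ring_nf
      rw [← h2]
      exact h1
    rcases lt_or_gt_of_ne hne with hlt | hgt
    · exact hnp (b - a) (by linarith) hxx.symm
    · have h2 : φ (a - b) (φ (b - a) x) = x := by
        rw [← hφ.map_add]
        have h0 : a - b + (b - a) = 0 := by ring
        rw [h0, hφ.map_zero]
      have h3 : φ (a - b) x = x := by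
        conv_lhs => rw [hxx]
        exact h2
      exact hnp (a - b) (by linarith) h3
  exact absurd (Stmt7.no_injective_compact_orbit hφ x (fun y => Iff.rfl) hKcomp hinj) not_false
end

section
/- Let M = {(x,y) ∈ ℝ² : x² + y² = 1/n for some positive integer n} ∪ {(0,0)}, with the Euclidean metric. There exists a flow φ on M such that fix(φ) = {(0,0)}, each circle {x² + y² = 1/n} is a periodic orbit of φ, φ is kinematic cw-expansive, and fix(φ) is not φ-isolated. -/
open Set Metric Filter

noncomputable section

/-- The space `{(x,y) : x² + y² = 1/n, n ∈ ℤ⁺} ∪ {(0,0)}` in the Euclidean plane. -/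
def circlesSpace : Set (EuclideanSpace ℝ (Fin 2)) :=
  {p | ∃ n : ℕ, 0 < n ∧ ‖p‖ ^ 2 = 1 / (n : ℝ)} ∪ {0}

abbrev E2 := EuclideanSpace ℝ (Fin 2)

noncomputable def cIso : ℂ ≃ₗᵢ[ℝ] E2 := Complex.orthonormalBasisOneI.repr

def rotE (t : ℝ) (p : E2) : E2 := cIso (Complex.exp (t * Complex.I) * cIso.symm p)

lemma norm_rotE (t : ℝ) (p : E2) : ‖rotE t p‖ = ‖p‖ := by
  simp [rotE, Complex.norm_exp_ofReal_mul_I]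

lemma rotE_zero_left (p : E2) : rotE 0 p = p := by
  simp [rotE]

lemma rotE_add (s t : ℝ) (p : E2) : rotE (s + t) p = rotE s (rotE t p) := by
  simp only [rotE, LinearIsometryEquiv.symm_apply_apply]
  congr 1
  rw [← mul_assoc, ← Complex.exp_add]
  push_cast
  ring_nf

lemma rotE_zero_right (t : ℝ) : rotE t 0 = 0 := by
  simp [rotE]

lemma rotE_two_pi (p : E2) : rotE (2 * Real.pi) p = p := by
  have : ((2 * Real.pi : ℝ) : ℂ) * Complex.I = 2 * (Real.pi : ℂ) * Complex.I := by push_cast; ring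
  simp [rotE, this, Complex.exp_two_pi_mul_I]

lemma rotE_pi_eq_self {p : E2} (h : rotE Real.pi p = p) : p = 0 := by
  have h2 : Complex.exp ((Real.pi : ℂ) * Complex.I) * cIso.symm p = cIso.symm p := by
    have := congrArg cIso.symm h
    simpa [rotE] using this
  rw [Complex.exp_pi_mul_I] at h2
  have h3 : (2 : ℂ) * cIso.symm p = 0 := by linear_combination -h2
  have hz : cIso.symm p = 0 :=
    (mul_eq_zero.mp h3).resolve_left two_ne_zero
  have := congrArg cIso hz
  simpa using this

lemma rotE_inj {a b : ℝ} {p : E2} (hp : p ≠ 0) (h : rotE a p = rotE b p) :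
    ∃ k : ℤ, a - b = k * (2 * Real.pi) := by
  have hz : cIso.symm p ≠ 0 := by
    intro h0
    exact hp (by simpa using congrArg cIso h0)
  have h2 : Complex.exp ((a : ℂ) * Complex.I) = Complex.exp ((b : ℂ) * Complex.I) := by
    have := congrArg cIso.symm h
    simp only [rotE, LinearIsometryEquiv.symm_apply_apply] at this
    exact mul_right_cancel₀ hz this
  have h3 : Complex.exp (((a : ℂ) - (b : ℂ)) * Complex.I) = 1 := by
    rw [sub_mul, Complex.exp_sub, h2, div_self (Complex.exp_ne_zero _)]
  rw [Complex.exp_eq_one_iff] at h3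
  obtain ⟨n, hn⟩ := h3
  refine ⟨n, ?_⟩
  have h4 : ((a - b : ℝ) : ℂ) * Complex.I = ((n * (2 * Real.pi) : ℝ) : ℂ) * Complex.I := by
    push_cast; linear_combination hn
  have := mul_right_cancel₀ Complex.I_ne_zero h4
  exact_mod_cast this

lemma rotE_surj {p q : E2} (hp : p ≠ 0) (h : ‖p‖ = ‖q‖) : ∃ t : ℝ, rotE t p = q := by
  set z := cIso.symm p with hzdef
  set w := cIso.symm q with hwdef
  have hz : z ≠ 0 := by
    intro h0; exact hp (by simpa [hzdef] using congrArg cIso h0)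
  have habs : ‖w / z‖ = 1 := by
    have h1 : ‖z‖ = ‖w‖ := by
      have h' := h
      simp only [← LinearIsometryEquiv.norm_map cIso.symm] at h'
      simpa [hzdef, hwdef] using h'
    rw [norm_div, ← h1, div_self]
    simpa using hz
  refine ⟨(w / z).arg, ?_⟩
  have h5 := Complex.norm_mul_exp_arg_mul_I (w / z)
  rw [habs] at h5
  simp only [Complex.ofReal_one, one_mul] at h5
  have hq : Complex.exp (((w / z).arg : ℂ) * Complex.I) * z = w := by
    rw [h5, div_mul_cancel₀ _ hz]
  show cIso (Complex.exp (((w / z).arg : ℂ) * Complex.I) * z) = q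
  rw [hq, hwdef]
  simp

/-- The rotation flow on `circlesSpace`. -/
def phiC (t : ℝ) (x : circlesSpace) : circlesSpace :=
  ⟨rotE t x, by
    rcases x.2 with ⟨n, hn, hx⟩ | hx
    · exact Or.inl ⟨n, hn, by rw [norm_rotE]; exact hx⟩
    · refine Or.inr ?_
      simp only [Set.mem_singleton_iff] at hx ⊢
      rw [hx, rotE_zero_right]⟩

lemma phiC_val (t : ℝ) (x : circlesSpace) : (phiC t x : E2) = rotE t (x : E2) := rfl

lemma phiC_flow : IsFlow phiC := by
  refine ⟨?_, ?_, ?_⟩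
  · apply Continuous.subtype_mk
    show Continuous fun p : ℝ × circlesSpace =>
      cIso (Complex.exp ((p.1 : ℂ) * Complex.I) * cIso.symm (p.2 : E2))
    exact cIso.continuous.comp
      ((Complex.continuous_exp.comp
        ((Complex.continuous_ofReal.comp continuous_fst).mul continuous_const)).mul
        (cIso.symm.continuous.comp (continuous_subtype_val.comp continuous_snd)))
  · exact fun x => Subtype.ext (rotE_zero_left _)
  · exact fun s t x => Subtype.ext (rotE_add s t _)

lemma phiC_two_pi (x : circlesSpace) : phiC (2 * Real.pi) x = x :=
  Subtype.ext (rotE_two_pi _)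

lemma phiC_cont_orbit (x : circlesSpace) : Continuous fun t : ℝ => phiC t x := by
  apply Continuous.subtype_mk
  show Continuous fun t : ℝ => cIso (Complex.exp ((t : ℂ) * Complex.I) * cIso.symm (x : E2))
  exact cIso.continuous.comp
    ((Complex.continuous_exp.comp (Complex.continuous_ofReal.mul continuous_const)).mul
      continuous_const)

lemma phiC_periodic (x : circlesSpace) :
    Function.Periodic (fun t => phiC t x) (2 * Real.pi) := by
  intro t
  show phiC (t + 2 * Real.pi) x = phiC t x
  rw [phiC_flow.map_add, phiC_two_pi]

lemma norm_sq_const_of_connected {A : Set circlesSpace} (hA : IsConnected A)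
    {x y : circlesSpace} (hx : x ∈ A) (hy : y ∈ A) :
    ‖(x : E2)‖ ^ 2 = ‖(y : E2)‖ ^ 2 := by
  set v : circlesSpace → ℝ := fun z => ‖(z : E2)‖ ^ 2 with hv
  have hvc : Continuous v := (continuous_subtype_val.norm).pow 2
  have hB : IsPreconnected (v '' A) := hA.isPreconnected.image v hvc.continuousOn
  have hord : (v '' A).OrdConnected := hB.ordConnected
  have main : ∀ a b : circlesSpace, a ∈ A → b ∈ A → v a < v b → False := by
    intro a b ha hb hab
    have hva : (0 : ℝ) ≤ v a := by positivity
    rcases b.2 with ⟨m, hm, hbm⟩ | hb0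
    · have hm0 : (0 : ℝ) < m := by exact_mod_cast hm
      have hvb : v b = 1 / (m : ℝ) := hbm
      set L : ℝ := max (v a) (1 / ((m : ℝ) + 1)) with hLdef
      set w : ℝ := (L + 1 / (m : ℝ)) / 2 with hwdef
      have hmm : 1 / ((m : ℝ) + 1) < 1 / (m : ℝ) :=
        one_div_lt_one_div_of_lt hm0 (by linarith)
      have hL1 : L < 1 / (m : ℝ) := max_lt (hvb ▸ hab) hmm
      have hw1 : L < w := by rw [hwdef]; linarith
      have hw2 : w < 1 / (m : ℝ) := by rw [hwdef]; linarith
      have hLpos : (0 : ℝ) < 1 / ((m : ℝ) + 1) := by positivity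
      have hwmem : w ∈ v '' A := by
        refine hord.out ⟨a, ha, rfl⟩ ⟨b, hb, rfl⟩ ⟨?_, ?_⟩
        · have : v a ≤ L := le_max_left _ _
          linarith
        · rw [hvb]; linarith
      obtain ⟨z, hz, hzw⟩ := hwmem
      rcases z.2 with ⟨k, hk, hzk⟩ | hz0
      · have hk0 : (0 : ℝ) < k := by exact_mod_cast hk
        have hwk : w = 1 / (k : ℝ) := by rw [← hzw]; exact hzk
        by_cases hkm : k ≤ m
        · have : 1 / (m : ℝ) ≤ 1 / (k : ℝ) :=
            one_div_le_one_div_of_le hk0 (by exact_mod_cast hkm)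
          linarith [hw2, hwk ▸ this]
        · have hk1 : (m : ℝ) + 1 ≤ (k : ℝ) := by
            have h15 : m + 1 ≤ k := Nat.succ_le_of_lt (Nat.lt_of_not_le hkm)
            exact_mod_cast h15
          have h1 : 1 / (k : ℝ) ≤ 1 / ((m : ℝ) + 1) :=
            one_div_le_one_div_of_le (by positivity) hk1
          have h2 : 1 / ((m : ℝ) + 1) ≤ L := le_max_right _ _
          rw [hwk] at hw1
          linarith
      · have : v z = 0 := by
          have : (z : E2) = 0 := hz0
          simp [hv, this]
        rw [hzw] at this
        have : (0 : ℝ) < w := lt_of_le_of_lt (le_of_lt hLpos) (lt_of_le_of_lt (le_max_right _ _) hw1)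
        linarith [hzw ▸ this]
    · have : v b = 0 := by
        have : (b : E2) = 0 := hb0
        simp [hv, this]
      linarith
  rcases lt_trichotomy (v x) (v y) with h | h | h
  · exact absurd h (fun h => main x y hx hy h)
  · exact h
  · exact absurd h (fun h => main y x hy hx h)

lemma norm_const_of_connected {A : Set circlesSpace} (hA : IsConnected A)
    {x y : circlesSpace} (hx : x ∈ A) (hy : y ∈ A) :
    ‖(x : E2)‖ = ‖(y : E2)‖ := by
  have h := norm_sq_const_of_connected hA hx hy
  have h1 := congrArg Real.sqrt h
  rwa [Real.sqrt_sq (norm_nonneg _), Real.sqrt_sq (norm_nonneg _)] at h1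

lemma continuum_orbit (A : Set circlesSpace) (hA : IsContinuum A) : IsOrbitSegment phiC A := by
  obtain ⟨x, hx⟩ := hA.2.1
  by_cases hx0 : (x : E2) = 0
  · refine ⟨x, {0}, Set.ordConnected_singleton, ?_⟩
    have hAx : A = {x} := by
      apply Set.Subset.antisymm
      · intro y hy
        have h := norm_const_of_connected hA.2 hy hx
        rw [hx0, norm_zero, norm_eq_zero] at h
        exact Set.mem_singleton_iff.mpr (Subtype.ext (h.trans hx0.symm))
      · exact Set.singleton_subset_iff.mpr hx
    rw [hAx, Set.image_singleton]
    congr 1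
    exact (phiC_flow.map_zero x).symm
  · set f : ℝ → circlesSpace := fun t => phiC t x with hf
    have hfcont : Continuous f := phiC_cont_orbit x
    have hfper : Function.Periodic f (2 * Real.pi) := phiC_periodic x
    have h2pi : (0 : ℝ) < 2 * Real.pi := by positivity
    have hrange : A ⊆ Set.range f := by
      intro y hy
      have hnorm : ‖(x : E2)‖ = ‖(y : E2)‖ := norm_const_of_connected hA.2 hx hy
      obtain ⟨t, ht⟩ := rotE_surj hx0 hnorm
      exact ⟨t, Subtype.ext ht⟩
    set K := f ⁻¹' A with hK
    have hKclosed : IsClosed K := hA.1.isClosed.preimage hfcont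
    by_cases hKuniv : K = Set.univ
    · refine ⟨x, Set.univ, Set.ordConnected_univ, ?_⟩
      rw [Set.image_univ]
      apply Set.Subset.antisymm hrange
      intro y ⟨t, ht⟩
      have : t ∈ K := hKuniv ▸ Set.mem_univ t
      exact ht ▸ this
    · obtain ⟨s, hs⟩ : ∃ s, s ∉ K := by
        by_contra h
        push_neg at h
        exact hKuniv (Set.eq_univ_of_forall h)
      have hsA : f s ∉ A := hs
      have hs2 : f (s + 2 * Real.pi) ∉ A := by
        rw [hfper s]; exact hsA
      set K₀ := K ∩ Set.Ioo s (s + 2 * Real.pi) with hK₀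
      have hinj : ∀ {a b : ℝ}, a ∈ Set.Ioo s (s + 2 * Real.pi) →
          b ∈ Set.Ioo s (s + 2 * Real.pi) → f a = f b → a = b := by
        intro a b ha hb hab
        have hval : rotE a (x : E2) = rotE b (x : E2) := congrArg Subtype.val hab
        obtain ⟨k, hk⟩ := rotE_inj hx0 hval
        have habs : |a - b| < 2 * Real.pi := by
          rw [abs_sub_lt_iff]
          constructor <;> [linarith [ha.2, hb.1]; linarith [hb.2, ha.1]]
        have hk0 : k = 0 := by
          by_contra h
          have h1 : (1 : ℝ) ≤ |(k : ℝ)| := by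
            rw [← Int.cast_abs]
            exact_mod_cast Int.one_le_abs h
          rw [hk, abs_mul, abs_of_pos h2pi] at habs
          nlinarith
        rw [hk0] at hk
        push_cast at hk
        linarith
      have hA0 : A = f '' K₀ := by
        apply Set.Subset.antisymm
        · intro y hy
          obtain ⟨t, ht⟩ := hrange hy
          set t' := toIocMod h2pi s t with ht'
          have ht'mem : t' ∈ Set.Ioc s (s + 2 * Real.pi) := toIocMod_mem_Ioc h2pi s t
          have hft' : f t' = f t := by
            rw [ht', ← self_sub_toIocDiv_zsmul h2pi s t]
            exact hfper.sub_zsmul_eq _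
          have ht'A : f t' ∈ A := by rw [hft', ht]; exact hy
          have ht'ne : t' ≠ s + 2 * Real.pi := by
            intro h; rw [h] at ht'A; exact hs2 ht'A
          exact ⟨t', ⟨ht'A, ht'mem.1, lt_of_le_of_ne ht'mem.2 ht'ne⟩, by rw [hft', ht]⟩
        · rintro _ ⟨t, ⟨htK, _⟩, rfl⟩
          exact htK
      refine ⟨x, K₀, ?_, hA0⟩
      constructor
      intro t₁ h₁ t₂ h₂ u hu
      have huIoo : u ∈ Set.Ioo s (s + 2 * Real.pi) :=
        ⟨lt_of_lt_of_le h₁.2.1 hu.1, lt_of_le_of_lt hu.2 h₂.2.2⟩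
      refine ⟨?_, huIoo⟩
      by_contra huK
      set B₁ := f '' (K₀ ∩ Set.Iic u) with hB₁
      set B₂ := f '' (K₀ ∩ Set.Ici u) with hB₂
      have hc₁ : IsCompact (K₀ ∩ Set.Iic u) := by
        have heq : K₀ ∩ Set.Iic u = K ∩ Set.Icc s u := by
          ext r
          simp only [hK₀, Set.mem_inter_iff, Set.mem_Ioo, Set.mem_Iic, Set.mem_Icc]
          constructor
          · rintro ⟨⟨hrK, hr1, _⟩, hru⟩
            exact ⟨hrK, le_of_lt hr1, hru⟩
          · rintro ⟨hrK, hr1, hr2⟩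
            refine ⟨⟨hrK, lt_of_le_of_ne hr1 ?_, ?_⟩, hr2⟩
            · rintro rfl; exact hs hrK
            · have := huIoo.2; linarith
        rw [heq]
        exact isCompact_Icc.inter_left hKclosed
      have hc₂ : IsCompact (K₀ ∩ Set.Ici u) := by
        have heq : K₀ ∩ Set.Ici u = K ∩ Set.Icc u (s + 2 * Real.pi) := by
          ext r
          simp only [hK₀, Set.mem_inter_iff, Set.mem_Ioo, Set.mem_Ici, Set.mem_Icc]
          constructor
          · rintro ⟨⟨hrK, _, hr2⟩, hru⟩
            exact ⟨hrK, hru, le_of_lt hr2⟩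
          · rintro ⟨hrK, hr1, hr2⟩
            refine ⟨⟨hrK, ?_, lt_of_le_of_ne hr2 ?_⟩, hr1⟩
            · have := huIoo.1; linarith
            · rintro rfl; exact hs2 hrK
        rw [heq]
        exact isCompact_Icc.inter_left hKclosed
      have hB₁closed : IsClosed B₁ := (hc₁.image hfcont).isClosed
      have hB₂closed : IsClosed B₂ := (hc₂.image hfcont).isClosed
      have hdisj : ∀ y, y ∈ B₁ → y ∈ B₂ → False := by
        rintro y ⟨a, ⟨haK, hau⟩, rfl⟩ ⟨b, ⟨hbK, hbu⟩, hba⟩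
        have hab : b = a := hinj hbK.2 haK.2 hba
        rw [hab] at hbu
        have : u = a := le_antisymm hbu hau
        exact huK (this ▸ haK.1)
      have hunion : A ⊆ B₁ ∪ B₂ := by
        rw [hA0]
        rintro _ ⟨t, htK, rfl⟩
        rcases le_total t u with h | h
        · exact Or.inl ⟨t, ⟨htK, h⟩, rfl⟩
        · exact Or.inr ⟨t, ⟨htK, h⟩, rfl⟩
      have h1B : f t₁ ∈ B₁ := ⟨t₁, ⟨h₁, hu.1⟩, rfl⟩
      have h2B : f t₂ ∈ B₂ := ⟨t₂, ⟨h₂, hu.2⟩, rfl⟩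
      have h1A : f t₁ ∈ A := h₁.1
      have h2A : f t₂ ∈ A := h₂.1
      have hpre := hA.2.2 B₂ᶜ B₁ᶜ hB₂closed.isOpen_compl hB₁closed.isOpen_compl
        (fun y hy => by
          by_cases hy2 : y ∈ B₂
          · exact Or.inr fun hy1 => hdisj y hy1 hy2
          · exact Or.inl hy2)
        ⟨f t₁, h1A, fun h => hdisj _ h1B h⟩
        ⟨f t₂, h2A, fun h => hdisj _ h h2B⟩
      obtain ⟨y, hyA, hy2, hy1⟩ := hpre
      rcases hunion hyA with h | h
      · exact hy1 h
      · exact hy2 h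


theorem stmt_9 :
    ∃ φ : ℝ → circlesSpace → circlesSpace, IsFlow φ ∧
      fixedPoints φ = {(⟨0, Or.inr rfl⟩ : circlesSpace)} ∧
      (∀ n : ℕ, 0 < n → ∀ x : circlesSpace,
        ‖(x : EuclideanSpace ℝ (Fin 2))‖ ^ 2 = 1 / (n : ℝ) →
        (∃ T > (0:ℝ), φ T x = x) ∧
        (Set.range fun t => φ t x) =
          {y : circlesSpace | ‖(y : EuclideanSpace ℝ (Fin 2))‖ ^ 2 = 1 / (n : ℝ)}) ∧
      KinematicCwExpansive φ ∧
      ¬ IsPhiIsolated φ (fixedPoints φ) := by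
  
  refine ⟨phiC, phiC_flow, ?_, ?_, ?_, ?_⟩
  · ext x
    simp only [fixedPoints, Set.mem_setOf_eq, Set.mem_singleton_iff]
    constructor
    · intro h
      have h1 := congrArg Subtype.val (h Real.pi)
      exact Subtype.ext (rotE_pi_eq_self h1)
    · rintro rfl t
      exact Subtype.ext (rotE_zero_right t)
  · intro n hn x hx
    have hnpos : (0 : ℝ) < n := Nat.cast_pos.mpr hn
    have hxz : (x : E2) ≠ 0 := by
      intro h0
      rw [h0, norm_zero] at hx
      have : (0 : ℝ) < 1 / (n : ℝ) := by positivity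
      simp only [zero_pow, ne_eq, OfNat.ofNat_ne_zero, not_false_eq_true] at hx
      linarith [hx ▸ this]
    refine ⟨⟨2 * Real.pi, by positivity, phiC_two_pi x⟩, ?_⟩
    ext y
    simp only [Set.mem_range, Set.mem_setOf_eq]
    constructor
    · rintro ⟨t, rfl⟩
      show ‖rotE t (x : E2)‖ ^ 2 = 1 / (n : ℝ)
      rw [norm_rotE]
      exact hx
    · intro hy
      have hnorm : ‖(x : E2)‖ = ‖(y : E2)‖ := by
        have h2 := congrArg Real.sqrt (hx.trans hy.symm)
        rwa [Real.sqrt_sq (norm_nonneg _), Real.sqrt_sq (norm_nonneg _)] at h2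
      obtain ⟨t, ht⟩ := rotE_surj hxz hnorm
      exact ⟨t, Subtype.ext ht⟩
  · exact ⟨1, one_pos, fun A hA _ => continuum_orbit A hA⟩
  · rintro ⟨U, hUopen, hU0, hUorb⟩
    have h0fix : (⟨0, Or.inr rfl⟩ : circlesSpace) ∈ fixedPoints phiC := by
      intro t; exact Subtype.ext (rotE_zero_right t)
    obtain ⟨ε, hε, hball⟩ := Metric.isOpen_iff.mp hUopen _ (hU0 h0fix)
    obtain ⟨n, hn⟩ := exists_nat_gt (1 / ε ^ 2)
    have hn0 : 0 < n := by
      have : (0 : ℝ) < n := lt_trans (by positivity) hn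
      exact_mod_cast this
    have hnpos : (0 : ℝ) < n := Nat.cast_pos.mpr hn0
    set p : E2 := cIso ((Real.sqrt (1 / n) : ℂ)) with hp
    have hpn : ‖p‖ ^ 2 = 1 / (n : ℝ) := by
      rw [hp, LinearIsometryEquiv.norm_map, Complex.norm_real,
        Real.norm_eq_abs, abs_of_nonneg (Real.sqrt_nonneg _), Real.sq_sqrt (by positivity)]
    have hmem : p ∈ circlesSpace := Or.inl ⟨n, hn0, hpn⟩
    have hlt : ‖p‖ < ε := by
      have h1 : (1 : ℝ) < n * ε ^ 2 := by
        rw [div_lt_iff₀ (by positivity)] at hn; linarith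
      have h2 : ‖p‖ ^ 2 < ε ^ 2 := by
        rw [hpn, div_lt_iff₀ hnpos]; nlinarith
      nlinarith [norm_nonneg p, hε]
    have hsub : (Set.range fun t => phiC t (⟨p, hmem⟩ : circlesSpace)) ⊆ U := by
      rintro _ ⟨t, rfl⟩
      apply hball
      rw [Metric.mem_ball]
      have hd : dist (phiC t (⟨p, hmem⟩ : circlesSpace)) (⟨0, Or.inr rfl⟩ : circlesSpace)
          = ‖rotE t p‖ := by
        rw [Subtype.dist_eq]
        show dist (rotE t p) (0 : E2) = ‖rotE t p‖
        rw [dist_zero_right]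
      rw [hd, norm_rotE]
      exact hlt
    have hfix := hUorb _ hsub
    have hXfix : (⟨p, hmem⟩ : circlesSpace) ∈ fixedPoints phiC :=
      hfix ⟨0, phiC_flow.map_zero _⟩
    have h1 := congrArg Subtype.val (hXfix Real.pi)
    have hp0 : p = 0 := rotE_pi_eq_self h1
    rw [hp0, norm_zero] at hpn
    simp only [zero_pow, ne_eq, OfNat.ofNat_ne_zero, not_false_eq_true] at hpn
    have : (0 : ℝ) < 1 / (n : ℝ) := by positivity
    linarith [hpn ▸ this]
end
end
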